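/- arXiv:math/0509401 — 7 statements merged into one kernel-verified Lean document; each statement's English description precedes it below -/
import Mathlib

section
/- Let ℓ be a prime number, let K = ℚ(ζ_ℓ) be the ℓ-th cyclotomic field, and let L be a finite field extension of K of prime degree p with p ≠ ℓ. Let q be a nonzero prime ideal of the ring of integers O_K of K not dividing ℓO_K, and suppose that the extended ideal qO_L is a prime ideal of O_L. If α ∈ O_K is such that there exists β ∈ O_L with β^ℓ ≡ α (mod qO_L), then there exists γ ∈ O_K with γ^ℓ ≡ α (mod q). -/
/-! Taking norms down to the residue field turns `β ^ ℓ ≡ α` into `N(β) ^ ℓ = α ^ p`; as `p` and `ℓ`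
are coprime, `α` is then an `ℓ`-th power modulo `q` itself. The fibre `κ(q) ⊗ 𝓞 L` replaces
`𝓞 L ⧸ q 𝓞 L`: its dimension over `κ(q)` is `[L : K]` for any prime `q`. -/

open NumberField

theorem exists_pow_eq_of_algebraMap_eq_pow {F A : Type*} [Field F] [CommRing A] [Algebra F A]
    {ℓ : ℕ} (hℓ : (Module.finrank F A).Coprime ℓ) {a : F} {b : A}
    (hb : b ^ ℓ = algebraMap F A a) : ∃ c : F, c ^ ℓ = a := by
  obtain ⟨c, hc, -⟩ := (pow_eq_pow_iff_of_coprime hℓ).mp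
    (show a ^ Module.finrank F A = Algebra.norm F b ^ ℓ by
      rw [← map_pow, hb, Algebra.norm_algebraMap])
  exact ⟨c, hc.symm⟩

theorem Ideal.exists_pow_sub_mem_of_pow_sub_mem_map {R S : Type*} [CommRing R] [CommRing S]
    [Algebra R S] (p : Ideal R) [p.IsMaximal] {ℓ : ℕ}
    (hℓ : (Module.finrank p.ResidueField (p.Fiber S)).Coprime ℓ) {α : R} {β : S}
    (hβ : β ^ ℓ - algebraMap R S α ∈ p.map (algebraMap R S)) :
    ∃ γ : R, γ ^ ℓ - α ∈ p := by
  let toFiber : S →ₐ[R] p.Fiber S := Algebra.TensorProduct.includeRight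
  have hmap : p.map (algebraMap R S) ≤ RingHom.ker toFiber := by
    rw [Ideal.map_le_iff_le_comap]
    intro x hx
    simp [toFiber, Ideal.algebraMap_residueField_eq_zero.mpr hx]
  have hb : toFiber β ^ ℓ = algebraMap p.ResidueField (p.Fiber S) (algebraMap R _ α) := by
    rw [← IsScalarTower.algebraMap_apply, ← toFiber.commutes, ← map_pow, ← sub_eq_zero,
      ← map_sub]
    exact hmap hβ
  obtain ⟨c, hc⟩ := exists_pow_eq_of_algebraMap_eq_pow hℓ hb
  obtain ⟨γ, rfl⟩ := p.algebraMap_residueField_surjective c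
  refine ⟨γ, Ideal.algebraMap_residueField_eq_zero.mp ?_⟩
  rw [map_sub, map_pow, hc, sub_self]

theorem stmt_0_general (ℓ : ℕ+) (hℓ : (ℓ : ℕ).Prime)
    (K : Type*) [Field K] [NumberField K]
    (L : Type*) [Field L] [NumberField L] [Algebra K L]
    (p : ℕ) (hp : p.Prime) (hpℓ : p ≠ (ℓ : ℕ)) (hdeg : Module.finrank K L = p)
    (q : Ideal (𝓞 K)) (hqprime : q.IsPrime) (hq0 : q ≠ ⊥)
    (α : 𝓞 K)
    (hβ : ∃ β : 𝓞 L, β ^ (ℓ : ℕ) - algebraMap (𝓞 K) (𝓞 L) α ∈ q.map (algebraMap (𝓞 K) (𝓞 L))) :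
    ∃ γ : 𝓞 K, γ ^ (ℓ : ℕ) - α ∈ q := by
  obtain ⟨β, hβ⟩ := hβ
  have : q.IsMaximal := hqprime.isMaximal hq0
  have hfiber : Module.finrank q.ResidueField (q.Fiber (𝓞 L)) = p := by
    rw [q.finrank_fiber_eq_finrank, ← IsFractionRing.finrank_eq (𝓞 K) K (𝓞 L) L, hdeg]
  refine q.exists_pow_sub_mem_of_pow_sub_mem_map ?_ hβ
  rw [hfiber]
  exact (Nat.coprime_primes hp hℓ).mpr hpℓ

/-- Let `ℓ` be a prime, `K = ℚ(ζ_ℓ)` the `ℓ`-th cyclotomic field, and `L` a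
finite extension of `K` of prime degree `p ≠ ℓ`.  Let `q` be a nonzero prime ideal of `𝓞 K`
not dividing `ℓ 𝓞 K` such that `q 𝓞 L` is prime.  If `α ∈ 𝓞 K` is congruent to an `ℓ`-th
power modulo `q 𝓞 L`, then it is congruent to an `ℓ`-th power modulo `q`. -/
theorem stmt_0 (ℓ : ℕ+) (hℓ : (ℓ : ℕ).Prime)
    (K : Type*) [Field K] [Algebra ℚ K] [IsCyclotomicExtension {(ℓ : ℕ)} ℚ K] [NumberField K]
    (L : Type*) [Field L] [NumberField L] [Algebra K L] [FiniteDimensional K L]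
    (p : ℕ) (hp : p.Prime) (hpℓ : p ≠ (ℓ : ℕ)) (hdeg : Module.finrank K L = p)
    (q : Ideal (𝓞 K)) (hqprime : q.IsPrime) (hq0 : q ≠ ⊥)
    (hqℓ : ¬ q ∣ Ideal.span {((ℓ : ℕ) : 𝓞 K)})
    (hqL : (q.map (algebraMap (𝓞 K) (𝓞 L))).IsPrime)
    (α : 𝓞 K)
    (hβ : ∃ β : 𝓞 L, β ^ (ℓ : ℕ) - algebraMap (𝓞 K) (𝓞 L) α ∈ q.map (algebraMap (𝓞 K) (𝓞 L))) :
    ∃ γ : 𝓞 K, γ ^ (ℓ : ℕ) - α ∈ q :=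
  stmt_0_general ℓ hℓ K L p hp hpℓ hdeg q hqprime hq0 α hβ
end

section
/- Let ℓ be a prime number and let k ⊆ k' be finite fields such that ℓ divides #k − 1 and the degree [k' : k] is not divisible by ℓ. If α ∈ k is an ℓ-th power in k', i.e. α = β^ℓ for some β ∈ k', then α is an ℓ-th power in k, i.e. α = γ^ℓ for some γ ∈ k. -/
/-- Let `ℓ` be a prime and `k ⊆ k'` finite fields such that `ℓ ∣ #k − 1`
and `ℓ ∤ [k' : k]`.  If `α ∈ k` is an `ℓ`-th power in `k'`, then it is an `ℓ`-th power
in `k`. -/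
theorem stmt_1 (ℓ : ℕ) (hℓ : ℓ.Prime)
    (k k' : Type*) [Field k] [Field k'] [Fintype k] [Fintype k'] [Algebra k k']
    (hcard : ℓ ∣ Fintype.card k - 1) (hdeg : ¬ ℓ ∣ Module.finrank k k')
    (α : k) (hα : ∃ β : k', algebraMap k k' α = β ^ ℓ) :
    ∃ γ : k, α = γ ^ ℓ := by
  obtain ⟨β, hβ⟩ := hα
  by_cases h0 : α = 0
  · exact ⟨0, by simp [h0, zero_pow hℓ.ne_zero]⟩
  · set n := Module.finrank k k' with hn
    have hnorm : (Algebra.norm k β) ^ ℓ = α ^ n := by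
      rw [← map_pow, ← hβ, Algebra.norm_algebraMap]
    have hc : Algebra.norm k β ≠ 0 := by
      intro h
      rw [h, zero_pow hℓ.ne_zero] at hnorm
      have : FiniteDimensional k k' := Module.Finite.of_finite
      exact h0 (pow_eq_zero_iff Module.finrank_pos.ne' |>.mp hnorm.symm)
    have hcop : Nat.Coprime ℓ n := (Nat.Prime.coprime_iff_not_dvd hℓ).mpr hdeg
    obtain ⟨a, b, hab⟩ : ∃ a b : ℤ, a * ℓ + b * n = 1 := by
      refine ⟨Nat.gcdA ℓ n, Nat.gcdB ℓ n, ?_⟩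
      have := Nat.gcd_eq_gcd_ab ℓ n
      rw [hcop] at this
      push_cast at this ⊢
      linarith [this]
    set u : kˣ := Units.mk0 α h0 with hu
    set v : kˣ := Units.mk0 (Algebra.norm k β) hc with hv
    have hun : v ^ (ℓ : ℤ) = u ^ (n : ℤ) := by
      rw [zpow_natCast, zpow_natCast]
      ext
      push_cast
      exact hnorm
    refine ⟨((u ^ a * v ^ b : kˣ) : k), ?_⟩
    have key : (u ^ a * v ^ b) ^ (ℓ : ℤ) = u := by
      rw [mul_zpow, ← zpow_mul, ← zpow_mul, mul_comm b (ℓ : ℤ), zpow_mul v, hun,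
        ← zpow_mul, ← zpow_add, show a * (ℓ : ℤ) + (n : ℤ) * b = 1 by linarith, zpow_one]
    have key2 : (u ^ a * v ^ b) ^ ℓ = u := by rw [← zpow_natCast, key]
    rw [← Units.val_pow_eq_pow_val, key2, hu, Units.val_mk0]
end

section
/- Let ℓ be a prime number and let k ⊆ k' be finite fields such that ℓ divides #k − 1 and the degree d = [k' : k] is not divisible by ℓ. Then the norm map N_{k'/k} : k'ˣ → kˣ sends ℓ-th powers to ℓ-th powers, and the induced group homomorphism k'ˣ/(k'ˣ)^ℓ → kˣ/(kˣ)^ℓ is an isomorphism; in particular, if α ∈ k'ˣ satisfies N_{k'/k}(α) ∈ (kˣ)^ℓ, then α ∈ (k'ˣ)^ℓ. -/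
/-!
The norm `N : k'ˣ → kˣ` is surjective, so its kernel has order
`(q ^ d - 1) / (q - 1) = ∑ i < d, q ^ i`, which is `≡ d [MOD ℓ]` because `q ≡ 1 [MOD ℓ]`.
Hence the kernel has order prime to `ℓ`, so each of its elements is an `ℓ`-th power in it.
If `N α = N β ^ ℓ`, then `α / β ^ ℓ` lies in the kernel, and `α` is an `ℓ`-th power.
-/

open Finset

section PowRange

variable {G H : Type*} [CommGroup G] [CommGroup H] {n : ℕ}

theorem powMonoidHom_range_le_comap (f : G →* H) :
    (powMonoidHom n : G →* G).range ≤ (powMonoidHom n : H →* H).range.comap f := by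
  rintro _ ⟨y, rfl⟩
  exact ⟨f y, (map_pow f y n).symm⟩

theorem map_mem_powMonoidHom_range_iff {f : G →* H} (hf : Function.Surjective f)
    (hker : (Nat.card f.ker).Coprime n) {x : G} :
    f x ∈ (powMonoidHom n : H →* H).range ↔ x ∈ (powMonoidHom n : G →* G).range := by
  refine ⟨?_, fun hx => powMonoidHom_range_le_comap f hx⟩
  rintro ⟨b, hb⟩
  obtain ⟨y, rfl⟩ := hf b
  have hxy : x * (y ^ n)⁻¹ ∈ f.ker := by
    rw [MonoidHom.mem_ker, map_mul, map_inv, map_pow, ← powMonoidHom_apply, hb, mul_inv_cancel]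
  obtain ⟨z, hz⟩ := (powCoprime hker).surjective ⟨_, hxy⟩
  refine ⟨y * z, ?_⟩
  have hz' : (z : G) ^ n = x * (y ^ n)⁻¹ := congrArg Subtype.val hz
  rw [powMonoidHom_apply, mul_pow, hz', mul_inv_cancel_comm_assoc]

theorem bijective_quotientMap_powMonoidHom_range {f : G →* H} (hf : Function.Surjective f)
    (hker : (Nat.card f.ker).Coprime n) :
    Function.Bijective (QuotientGroup.map (powMonoidHom n : G →* G).range
      (powMonoidHom n : H →* H).range f (powMonoidHom_range_le_comap f)) := by
  refine ⟨(injective_iff_map_eq_one _).2 fun x hx => ?_, fun y => ?_⟩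
  · obtain ⟨α, rfl⟩ := QuotientGroup.mk_surjective x
    rw [QuotientGroup.map_mk, QuotientGroup.eq_one_iff] at hx
    exact (QuotientGroup.eq_one_iff α).2 ((map_mem_powMonoidHom_range_iff hf hker).1 hx)
  · obtain ⟨β, rfl⟩ := QuotientGroup.mk_surjective y
    obtain ⟨α, rfl⟩ := hf β
    exact ⟨α, rfl⟩

end PowRange

theorem Nat.ModEq.geomSum_modEq_of_modEq_one {q ℓ : ℕ} (h : q ≡ 1 [MOD ℓ]) (d : ℕ) :
    ∑ i ∈ range d, q ^ i ≡ d [MOD ℓ] :=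
  calc ∑ i ∈ range d, q ^ i ≡ ∑ i ∈ range d, 1 ^ i [MOD ℓ] := Nat.ModEq.sum fun i _ => h.pow i
    _ = d := by simp

theorem FiniteField.card_ker_unitsMap_norm (K L : Type*) [Field K] [Field L] [Algebra K L]
    [Finite L] :
    Nat.card (Units.map (Algebra.norm K : L →* K)).ker =
      ∑ i ∈ range (Module.finrank K L), Nat.card K ^ i := by
  have := Finite.of_injective _ (algebraMap K L).injective
  have : Module.Finite K L := Module.Finite.of_finite
  have hcard := (Units.map (Algebra.norm K : L →* K)).ker.card_mul_index
  rw [Subgroup.index_ker, MonoidHom.range_eq_top.2 (unitsMap_norm_surjective K L),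
    Subgroup.card_top, Nat.card_units, Nat.card_units, Module.natCard_eq_pow_finrank (K := K) (V := L)] at hcard
  rw [Nat.geomSum_eq Finite.one_lt_card, Nat.eq_div_of_mul_eq_left _ hcard]
  exact Nat.sub_ne_zero_of_lt Finite.one_lt_card

/-- Let `ℓ` be a prime and `k ⊆ k'` finite fields with `ℓ ∣ #k − 1` and
`ℓ ∤ [k' : k]`.  Then the norm map `N : k'ˣ →* kˣ` sends `ℓ`-th powers to `ℓ`-th powers,
the induced homomorphism `k'ˣ/(k'ˣ)^ℓ → kˣ/(kˣ)^ℓ` is an isomorphism, and in particular any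
unit of `k'` whose norm is an `ℓ`-th power is itself an `ℓ`-th power. -/
theorem stmt_2 (ℓ : ℕ) (hℓ : ℓ.Prime)
    (k k' : Type*) [Field k] [Field k'] [Fintype k] [Fintype k'] [Algebra k k']
    (hcard : ℓ ∣ Fintype.card k - 1) (hdeg : ¬ ℓ ∣ Module.finrank k k') :
    (∀ x : k'ˣ, x ∈ (powMonoidHom ℓ : k'ˣ →* k'ˣ).range →
        Units.map (Algebra.norm k : k' →* k) x ∈ (powMonoidHom ℓ : kˣ →* kˣ).range) ∧
    (∃ h : (powMonoidHom ℓ : k'ˣ →* k'ˣ).range ≤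
        Subgroup.comap (Units.map (Algebra.norm k : k' →* k))
          (powMonoidHom ℓ : kˣ →* kˣ).range,
      Function.Bijective
        (QuotientGroup.map (powMonoidHom ℓ : k'ˣ →* k'ˣ).range
          (powMonoidHom ℓ : kˣ →* kˣ).range (Units.map (Algebra.norm k : k' →* k)) h)) ∧
    (∀ α : k'ˣ, Units.map (Algebra.norm k : k' →* k) α ∈ (powMonoidHom ℓ : kˣ →* kˣ).range →
        α ∈ (powMonoidHom ℓ : k'ˣ →* k'ˣ).range) := by
  set N := Units.map (Algebra.norm k : k' →* k)
  have hsurj : Function.Surjective N := FiniteField.unitsMap_norm_surjective k k'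
  have hq : Nat.card k ≡ 1 [MOD ℓ] := by
    rw [← Fintype.card_eq_nat_card]
    exact ((Nat.modEq_iff_dvd' Fintype.card_pos).2 hcard).symm
  have hker : (Nat.card N.ker).Coprime ℓ := by
    rw [FiniteField.card_ker_unitsMap_norm, Nat.coprime_comm, hℓ.coprime_iff_not_dvd,
      (hq.geomSum_modEq_of_modEq_one _).dvd_iff dvd_rfl]
    exact hdeg
  exact ⟨fun x hx => powMonoidHom_range_le_comap N hx,
    ⟨_, bijective_quotientMap_powMonoidHom_range hsurj hker⟩,
    fun α hα => (map_mem_powMonoidHom_range_iff hsurj hker).1 hα⟩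
end

section
/- Let ℓ be an odd prime number, let K = ℚ(ζ_ℓ) be the ℓ-th cyclotomic field with ring of integers O_K, and set λ = 1 − ζ_ℓ ∈ O_K. Let q be a prime number different from ℓ and let 𝔭 be a prime ideal of O_K lying over q. If there exists β ∈ O_K with β^ℓ ≡ ζ_ℓ (mod 𝔭), then there exists γ ∈ O_K with γ^ℓ ≡ q (mod λ^{ℓ+1} O_K). -/
/-!
Take `γ = q`. Modulo `𝔭` the class of `β` is a primitive `ℓ²`-th root of unity, because
`β^ℓ ≡ ζ` and `ζ` stays a primitive `ℓ`-th root of unity modulo a prime not above `ℓ`.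
Since `𝓞 K = ℤ[ζ]` and `q^(ℓ-1) ≡ 1 (mod ℓ)`, the `(ℓ-1)`-fold Frobenius `x ↦ x^(q^(ℓ-1))`
fixes `ζ`, hence all of `𝓞 K ⧸ 𝔭`, in particular `β`. So `ℓ² ∣ q^(ℓ-1) - 1`, i.e.
`ℓ² ∣ q^ℓ - q`, and `λ^(ℓ+1) ∣ λ^(2(ℓ-1)) ∣ ℓ²` because `λ^(ℓ-1) ∣ ℓ` and `ℓ ≥ 3`.
-/

open NumberField

namespace IsPrimitiveRoot

variable {R : Type*} [CommRing R]

theorem one_sub_pow_sub_one_dvd [IsDomain R] {ζ : R} {p : ℕ} [Fact p.Prime]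
    (hζ : IsPrimitiveRoot ζ p) : (1 - ζ) ^ (p - 1) ∣ (p : R) := by
  have hprod : (p : R) = ∏ μ ∈ primitiveRoots p R, (1 - μ) := by
    simpa [Polynomial.cyclotomic_eq_prod_X_sub_primitiveRoots hζ, Polynomial.eval_prod]
      using (Polynomial.eval_one_cyclotomic_prime (R := R) (p := p)).symm
  rw [hprod, ← Nat.totient_prime Fact.out, ← hζ.card_primitiveRoots, ← Finset.prod_const]
  refine Finset.prod_dvd_prod_of_dvd _ _ fun μ hμ ↦ ?_
  obtain ⟨i, -, rfl⟩ := hζ.eq_pow_of_pow_eq_one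
    ((mem_primitiveRoots (Fact.out : p.Prime).pos).mp hμ).pow_eq_one
  simpa using sub_dvd_pow_sub_pow (1 : R) ζ i

theorem map_of_natCast_ne_zero [IsDomain R] {S : Type*} [CommRing S] {ζ : R} {p : ℕ}
    [Fact p.Prime] (hζ : IsPrimitiveRoot ζ p) (f : R →+* S) (hp : (p : S) ≠ 0) :
    IsPrimitiveRoot (f ζ) p := by
  have hne : f ζ ≠ 1 := fun h ↦ hp <| by
    have : f (1 - ζ) = 0 := by rw [map_sub, map_one, h, sub_self]
    simpa [this, zero_pow (Nat.sub_ne_zero_of_lt (Fact.out : p.Prime).one_lt)] using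
      map_dvd f hζ.one_sub_pow_sub_one_dvd
  exact IsPrimitiveRoot.iff_orderOf.mpr
    (orderOf_eq_prime (by rw [← map_pow, hζ.pow_eq_one, map_one]) hne)

theorem sq_of_pow {M : Type*} [CommMonoid M] {b : M} {n : ℕ} (h : IsPrimitiveRoot (b ^ n) n) :
    IsPrimitiveRoot b (n ^ 2) := by
  refine ⟨by rw [sq, pow_mul, h.pow_eq_one], fun k hk ↦ ?_⟩
  obtain ⟨m, rfl⟩ := h.dvd_of_pow_eq_one k (by rw [← pow_mul, mul_comm, pow_mul, hk, one_pow])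
  rw [sq]
  exact mul_dvd_mul_left n (h.dvd_of_pow_eq_one m (by rw [← pow_mul, hk]))

theorem dvd_sub_one_of_pow_eq_self {M : Type*} [CommMonoid M] {b : M} {n m : ℕ}
    (h : IsPrimitiveRoot b n) (hn : n ≠ 0) (hb : b ^ m = b) : n ∣ m - 1 := by
  refine h.dvd_of_pow_eq_one _ ((h.isUnit hn).mul_left_cancel ?_)
  rcases m with _ | m
  · simp
  · simpa [pow_succ'] using hb

end IsPrimitiveRoot

theorem pow_pow_eq_self_of_adjoin_eq_top {F : Type*} [CommRing F] {q k : ℕ} [ExpChar F q]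
    {z : F} (hz : Algebra.adjoin ℤ {z} = ⊤) (hzq : z ^ q ^ k = z) (x : F) : x ^ q ^ k = x := by
  have h := AlgHom.ext_of_adjoin_eq_top hz (φ₁ := (iterateFrobenius F q k).toIntAlgHom)
    (φ₂ := AlgHom.id ℤ F) (by simpa [iterateFrobenius_def] using hzq)
  simpa [iterateFrobenius_def] using DFunLike.congr_fun h x

theorem sq_dvd_pow_sub_one_of_pow_sub_mem {R : Type*} [CommRing R] [IsDomain R] {ζ : R}
    {p q : ℕ} [Fact p.Prime] (hζ : IsPrimitiveRoot ζ p) (hadj : Algebra.adjoin ℤ {ζ} = ⊤)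
    (hq : q.Prime) (hqp : q ≠ p) {𝔭 : Ideal R} [𝔭.IsPrime] (hq𝔭 : (q : R) ∈ 𝔭)
    {β : R} (hβ : β ^ p - ζ ∈ 𝔭) : p ^ 2 ∣ q ^ (p - 1) - 1 := by
  have hp : p.Prime := Fact.out
  let π := Ideal.Quotient.mk 𝔭
  have hqF : (q : R ⧸ 𝔭) = 0 := by rwa [← map_natCast π, Ideal.Quotient.eq_zero_iff_mem]
  have : CharP (R ⧸ 𝔭) q := (CharP.charP_iff_prime_eq_zero hq).mpr hqF
  have : ExpChar (R ⧸ 𝔭) q := ExpChar.prime hq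
  have hpF : (p : R ⧸ 𝔭) ≠ 0 := by
    rw [Ne, CharP.cast_eq_zero_iff (R ⧸ 𝔭) q, Nat.prime_dvd_prime_iff_eq hq hp]
    exact hqp
  have hζF : IsPrimitiveRoot (π ζ) p := hζ.map_of_natCast_ne_zero π hpF
  have hβF : IsPrimitiveRoot (π β) (p ^ 2) := by
    refine IsPrimitiveRoot.sq_of_pow ?_
    rwa [← map_pow, Ideal.Quotient.eq.mpr hβ]
  have hadjF : Algebra.adjoin ℤ {π ζ} = ⊤ := by
    have := Algebra.adjoin_image ℤ (Ideal.Quotient.mkₐ ℤ 𝔭) {ζ}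
    rw [Set.image_singleton, hadj, Algebra.map_top] at this
    exact this.trans (AlgHom.range_eq_top _ |>.mpr (Ideal.Quotient.mkₐ_surjective ℤ 𝔭))
  have hfermat : (π ζ) ^ q ^ (p - 1) = π ζ := by
    have h := Nat.ModEq.pow_totient ((Nat.coprime_primes hq hp).mpr hqp)
    rw [Nat.totient_prime hp, Nat.ModEq, Nat.one_mod_eq_one.mpr hp.one_lt.ne'] at h
    rw [← pow_mod_orderOf, ← hζF.eq_orderOf, h, pow_one]
  exact hβF.dvd_sub_one_of_pow_eq_self (pow_ne_zero 2 hp.ne_zero)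
    (pow_pow_eq_self_of_adjoin_eq_top hadjF hfermat (π β))

theorem stmt_4_general (ℓ : ℕ+) (hℓ : (ℓ : ℕ).Prime) (hodd : Odd (ℓ : ℕ))
    (K : Type*) [Field K] [Algebra ℚ K] [IsCyclotomicExtension {(ℓ : ℕ)} ℚ K]
    (ζ : 𝓞 K) (hζ : IsPrimitiveRoot ζ (ℓ : ℕ))
    (q : ℕ) (hq : q.Prime) (hqℓ : q ≠ (ℓ : ℕ))
    (𝔭 : Ideal (𝓞 K)) (h𝔭 : 𝔭.IsPrime) (hlies : ((q : ℕ) : 𝓞 K) ∈ 𝔭)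
    (hβ : ∃ β : 𝓞 K, β ^ (ℓ : ℕ) - ζ ∈ 𝔭) :
    ∃ γ : 𝓞 K, γ ^ (ℓ : ℕ) - (q : 𝓞 K) ∈ Ideal.span {(1 - ζ) ^ ((ℓ : ℕ) + 1)} := by
  obtain ⟨β, hβ⟩ := hβ
  have : Fact (ℓ : ℕ).Prime := ⟨hℓ⟩
  have : CharZero K := algebraRat.charZero K
  -- `ringOfIntegers` is stated for the canonical `ℚ`-algebra structure on `K`.
  have : @IsCyclotomicExtension {(ℓ : ℕ)} ℚ K _ _ DivisionRing.toRatAlgebra := by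
    rwa [Subsingleton.elim (DivisionRing.toRatAlgebra : Algebra ℚ K) ‹_›]
  have : IsCyclotomicExtension {(ℓ : ℕ)} ℤ (𝓞 K) := IsCyclotomicExtension.ringOfIntegers
  have hsq : (ℓ : ℕ) ^ 2 ∣ q ^ ((ℓ : ℕ) - 1) - 1 :=
    sq_dvd_pow_sub_one_of_pow_sub_mem hζ
      (IsCyclotomicExtension.adjoin_primitive_root_eq_top hζ) hq hqℓ hlies hβ
  have hsq' : (ℓ : ℕ) ^ 2 ∣ q ^ (ℓ : ℕ) - q := by
    rw [show q ^ (ℓ : ℕ) - q = q * (q ^ ((ℓ : ℕ) - 1) - 1) by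
      rw [Nat.mul_sub_one, ← pow_succ', Nat.sub_add_cancel hℓ.one_le]]
    exact hsq.mul_left q
  refine ⟨q, Ideal.mem_span_singleton.mpr ?_⟩
  calc (1 - ζ) ^ ((ℓ : ℕ) + 1) ∣ ((1 - ζ) ^ ((ℓ : ℕ) - 1)) ^ 2 := by
        rw [← pow_mul]
        exact pow_dvd_pow _ (by have := hℓ.two_le; obtain ⟨k, hk⟩ := hodd; omega)
    _ ∣ ((ℓ : ℕ) : 𝓞 K) ^ 2 := pow_dvd_pow_of_dvd hζ.one_sub_pow_sub_one_dvd 2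
    _ ∣ (q : 𝓞 K) ^ (ℓ : ℕ) - q := by
        rw [← Nat.cast_pow, ← Nat.cast_pow, ← Nat.cast_sub (Nat.le_self_pow hℓ.ne_zero q)]
        exact Nat.cast_dvd_cast hsq'

/-- Let `ℓ` be an odd prime, `K = ℚ(ζ_ℓ)` with ring of integers `𝓞 K`, and
`λ = 1 − ζ_ℓ`.  Let `q ≠ ℓ` be a prime number and `𝔭` a prime ideal of `𝓞 K` lying over `q`.
If `ζ_ℓ` is congruent to an `ℓ`-th power modulo `𝔭`, then `q` is congruent to an `ℓ`-th power
modulo `λ^{ℓ+1} 𝓞 K`. -/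
theorem stmt_4 (ℓ : ℕ+) (hℓ : (ℓ : ℕ).Prime) (hodd : Odd (ℓ : ℕ))
    (K : Type*) [Field K] [Algebra ℚ K] [IsCyclotomicExtension {(ℓ : ℕ)} ℚ K] [NumberField K]
    (ζ : 𝓞 K) (hζ : IsPrimitiveRoot ζ (ℓ : ℕ))
    (q : ℕ) (hq : q.Prime) (hqℓ : q ≠ (ℓ : ℕ))
    (𝔭 : Ideal (𝓞 K)) (h𝔭 : 𝔭.IsPrime) (hlies : ((q : ℕ) : 𝓞 K) ∈ 𝔭)
    (hβ : ∃ β : 𝓞 K, β ^ (ℓ : ℕ) - ζ ∈ 𝔭) :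
    ∃ γ : 𝓞 K, γ ^ (ℓ : ℕ) - (q : 𝓞 K) ∈ Ideal.span {(1 - ζ) ^ ((ℓ : ℕ) + 1)} :=
  stmt_4_general ℓ hℓ hodd K ζ hζ q hq hqℓ 𝔭 h𝔭 hlies hβ
end

section
/- Let ℓ and p be distinct prime numbers and let L/K be an extension of number fields of degree p. Let q be a nonzero prime ideal of O_K such that either qO_L is a prime ideal of O_L, or qO_L = P^p for some prime ideal P of O_L, and let P denote the unique prime ideal of O_L lying over q. If α ∈ Lˣ satisfies N_{L/K}(α) ∈ (Kˣ)^ℓ, then ℓ divides ord_P(α). -/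
/-!
Write `f` for the residue degree of `P` over `q`. Since `P` is the only prime of `𝓞 L` above `q`,
the `q`-adic valuation of the relative norm of an ideal `I` of `𝓞 L` is `f · ord_P I`; comparing
with `q 𝓞 L = P ^ e` gives `e f = p`, so `ℓ ∤ f`. The relative norm of `(a)` is `(N a)`, and
`N a / N b = N α` is an `ℓ`-th power, so `ℓ ∣ ord_q (N a) - ord_q (N b) = f (ord_P a - ord_P b)`.
-/

open NumberField Ideal

section Multiplicity

variable {α : Type*} [CommMonoidWithZero α] [IsCancelMulZero α] [WfDvdMonoid α] {p : α}

theorem multiplicity_mul_of_ne_zero (hp : Prime p) {a b : α} (ha : a ≠ 0) (hb : b ≠ 0) :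
    multiplicity p (a * b) = multiplicity p a + multiplicity p b :=
  multiplicity_mul hp (.of_prime_left hp (mul_ne_zero ha hb))

theorem multiplicity_pow_of_ne_zero (hp : Prime p) {a : α} (ha : a ≠ 0) (n : ℕ) :
    multiplicity p (a ^ n) = n * multiplicity p a :=
  (FiniteMultiplicity.of_prime_left hp ha).multiplicity_pow hp

end Multiplicity

namespace Ideal

theorem dvd_multiplicity_sub_of_div_eq_pow {R K : Type*} [CommRing R] [IsDedekindDomain R]
    [Field K] [Algebra R K] [IsFractionRing R K] {q : Ideal R} (hq : Prime q) {u v : R}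
    (hu : u ≠ 0) (hv : v ≠ 0) {ℓ : ℕ} (hℓ : ℓ ≠ 0) {x : K}
    (hx : x ^ ℓ = algebraMap R K u / algebraMap R K v) :
    (ℓ : ℤ) ∣ (multiplicity q (span {u}) : ℤ) - multiplicity q (span {v}) := by
  obtain ⟨c, d, hd, rfl⟩ := IsFractionRing.div_surjective (A := R) x
  have hd0 : d ≠ 0 := nonZeroDivisors.ne_zero hd
  have hcross : u * d ^ ℓ = c ^ ℓ * v := by
    apply IsFractionRing.injective R K
    have hdK := IsFractionRing.to_map_ne_zero_of_mem_nonZeroDivisors (K := K) hd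
    have hvK : algebraMap R K v ≠ 0 := (map_ne_zero_iff _ (IsFractionRing.injective R K)).mpr hv
    rw [div_pow, div_eq_div_iff (pow_ne_zero _ hdK) hvK] at hx
    simp only [map_mul, map_pow]
    linear_combination -hx
  have hc0 : c ≠ 0 := by
    rintro rfl
    rw [zero_pow hℓ, zero_mul] at hcross
    exact mul_ne_zero hu (pow_ne_zero _ hd0) hcross
  have hne {y : R} (hy : y ≠ 0) : span {y} ≠ 0 := by
    rwa [zero_eq_bot, ne_eq, span_singleton_eq_bot]
  have hmult := congrArg (multiplicity q)
    (show span {u} * span {d} ^ ℓ = span {c} ^ ℓ * span {v} by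
      simp only [span_singleton_pow, span_singleton_mul_span_singleton, hcross])
  rw [multiplicity_mul_of_ne_zero hq (hne hu) (pow_ne_zero _ (hne hd0)),
    multiplicity_mul_of_ne_zero hq (pow_ne_zero _ (hne hc0)) (hne hv),
    multiplicity_pow_of_ne_zero hq (hne hd0), multiplicity_pow_of_ne_zero hq (hne hc0)] at hmult
  exact ⟨multiplicity q (span {c}) - multiplicity q (span {d}), by linarith⟩

theorem eq_of_liesOver_of_map_eq_pow {R S : Type*} [CommRing R] [CommRing S] [Algebra R S]
    {p : Ideal R} {P : Ideal S} [P.IsMaximal] {e : ℕ} (he0 : e ≠ 0)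
    (he : p.map (algebraMap R S) = P ^ e) (Q : Ideal S) [hQ : Q.IsPrime] [Q.LiesOver p] :
    Q = P := by
  have hPe : P ^ e ≤ Q := he ▸ map_le_iff_le_comap.mpr (le_of_eq (Q.over_def p))
  exact (IsMaximal.eq_of_le inferInstance hQ.ne_top ((hQ.pow_le_iff he0).mp hPe)).symm

variable {R S : Type*} [CommRing R] [CommRing S] [IsDedekindDomain R] [IsDedekindDomain S]
  [Algebra R S] [Module.Finite R S] [Module.IsTorsionFree R S] [PerfectField (FractionRing R)]
  {p : Ideal R} [p.IsMaximal] {P : Ideal S} [P.IsMaximal] [P.LiesOver p]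

theorem multiplicity_relNorm_of_prime (hp : p ≠ ⊥)
    (huniq : ∀ (Q : Ideal S) [Q.IsPrime] [Q.LiesOver p], Q = P) {Q : Ideal S} (hQ : Prime Q) :
    multiplicity p (relNorm R Q) = P.inertiaDeg R * multiplicity P Q := by
  have : Q.IsMaximal := (isPrime_of_prime hQ).isMaximal hQ.ne_zero
  by_cases hQP : Q = P
  · subst hQP
    rw [relNorm_eq_pow_of_isMaximal Q p,
      multiplicity_pow_self_of_prime (prime_of_isPrime hp inferInstance), multiplicity_self,
      mul_one]
  · have hPQ : multiplicity P Q = 0 := multiplicity_eq_zero.mpr fun h ↦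
      hQP (IsMaximal.eq_of_le inferInstance IsPrime.ne_top' (le_of_dvd h))
    rw [hPQ, mul_zero, relNorm_eq_pow_of_isMaximal Q (Q.under R), multiplicity_eq_zero]
    intro hdvd
    have hle : Q.under R ≤ p :=
      le_of_dvd ((prime_of_isPrime hp inferInstance).dvd_of_dvd_pow hdvd)
    have : Q.LiesOver p := ⟨(IsMaximal.eq_of_le inferInstance IsPrime.ne_top' hle).symm⟩
    exact hQP (huniq Q)

theorem multiplicity_relNorm (hp : p ≠ ⊥)
    (huniq : ∀ (Q : Ideal S) [Q.IsPrime] [Q.LiesOver p], Q = P) {I : Ideal S} (hI : I ≠ ⊥) :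
    multiplicity p (relNorm R I) = P.inertiaDeg R * multiplicity P I := by
  have hp' : Prime p := prime_of_isPrime hp inferInstance
  have hP' : Prime P := prime_of_isPrime (ne_bot_of_liesOver_of_ne_bot hp P) inferInstance
  induction I using UniqueFactorizationMonoid.induction_on_prime with
  | h₁ => exact absurd rfl hI
  | h₂ I hu =>
    rw [multiplicity_of_isUnit_right hp'.not_isUnit (hu.map _),
      multiplicity_of_isUnit_right hP'.not_isUnit hu, mul_zero]
  | h₃ J Q hJ hQ ih =>
    rw [map_mul, multiplicity_mul_of_ne_zero hp' (relNorm_eq_bot_iff.not.mpr hQ.ne_zero)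
        (relNorm_eq_bot_iff.not.mpr hJ), multiplicity_mul_of_ne_zero hP' hQ.ne_zero hJ,
      multiplicity_relNorm_of_prime hp huniq hQ, ih hJ, mul_add]

theorem inertiaDeg_mul_eq_finrank_of_map_eq_pow (hp : p ≠ ⊥) {e : ℕ} (he0 : e ≠ 0)
    (he : p.map (algebraMap R S) = P ^ e) :
    P.inertiaDeg R * e = Module.finrank R S := by
  have hp' : Prime p := prime_of_isPrime hp inferInstance
  have hP' : Prime P := prime_of_isPrime (ne_bot_of_liesOver_of_ne_bot hp P) inferInstance
  have h := multiplicity_relNorm hp (eq_of_liesOver_of_map_eq_pow he0 he)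
    (I := p.map (algebraMap R S)) ((map_eq_bot_iff_of_injective
      (FaithfulSMul.algebraMap_injective R S)).not.mpr hp)
  rwa [relNorm_algebraMap, multiplicity_pow_self_of_prime hp', he,
    multiplicity_pow_self_of_prime hP', eq_comm] at h

end Ideal

theorem stmt_6_general (ℓ p : ℕ) (hℓ : ℓ.Prime) (hp : p.Prime) (hℓp : ℓ ≠ p)
    (K L : Type*) [Field K] [Field L] [NumberField K] [NumberField L]
    [Algebra K L] (hdeg : Module.finrank K L = p)
    (q : Ideal (𝓞 K)) (hq : q.IsPrime) (hq0 : q ≠ ⊥)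
    (P : Ideal (𝓞 L)) (hP : P.IsPrime)
    (hPq : P.comap (algebraMap (𝓞 K) (𝓞 L)) = q)
    (hqL : q.map (algebraMap (𝓞 K) (𝓞 L)) = P ∨ q.map (algebraMap (𝓞 K) (𝓞 L)) = P ^ p)
    (α : L)
    (hnorm : ∃ x : K, x ^ ℓ = Algebra.norm K α)
    (a b : 𝓞 L) (ha : a ≠ 0) (hb : b ≠ 0)
    (hab : α = algebraMap (𝓞 L) L a / algebraMap (𝓞 L) L b) :
    (ℓ : ℤ) ∣ (multiplicity P (Ideal.span {a}) : ℤ) - (multiplicity P (Ideal.span {b}) : ℤ) := by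
  have : q.IsMaximal := hq.isMaximal hq0
  have : P.LiesOver q := ⟨hPq.symm⟩
  have : P.IsMaximal := hP.isMaximal (ne_bot_of_liesOver_of_ne_bot hq0 P)
  obtain ⟨e, he0, he⟩ : ∃ e ≠ 0, q.map (algebraMap (𝓞 K) (𝓞 L)) = P ^ e :=
    hqL.elim (fun h ↦ ⟨1, one_ne_zero, by rw [h, pow_one]⟩) fun h ↦ ⟨p, hp.ne_zero, h⟩
  have hfp : P.inertiaDeg (𝓞 K) ∣ p := ⟨e, by
    rw [inertiaDeg_mul_eq_finrank_of_map_eq_pow hq0 he0 he,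
      ← IsFractionRing.finrank_eq (𝓞 K) K (𝓞 L) L, hdeg]⟩
  have hℓf : ¬(ℓ : ℤ) ∣ P.inertiaDeg (𝓞 K) := fun h ↦
    hℓp ((Nat.prime_dvd_prime_iff_eq hℓ hp).mp ((Int.natCast_dvd_natCast.mp h).trans hfp))
  obtain ⟨x, hx⟩ := hnorm
  have hx' : x ^ ℓ = algebraMap (𝓞 K) K (Algebra.intNorm (𝓞 K) (𝓞 L) a) /
      algebraMap (𝓞 K) K (Algebra.intNorm (𝓞 K) (𝓞 L) b) := by
    rw [hx, hab, div_eq_mul_inv, map_mul, Algebra.norm_inv, Algebra.algebraMap_intNorm (L := L),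
      Algebra.algebraMap_intNorm (L := L), div_eq_mul_inv]
  have hdvd := dvd_multiplicity_sub_of_div_eq_pow (prime_of_isPrime hq0 hq)
    (Algebra.intNorm_eq_zero.not.mpr ha) (Algebra.intNorm_eq_zero.not.mpr hb) hℓ.ne_zero hx'
  have huniq := eq_of_liesOver_of_map_eq_pow he0 he
  rw [← relNorm_singleton, ← relNorm_singleton,
    multiplicity_relNorm hq0 huniq (span_singleton_eq_bot.not.mpr ha),
    multiplicity_relNorm hq0 huniq (span_singleton_eq_bot.not.mpr hb)] at hdvd
  push_cast at hdvd
  rw [← mul_sub] at hdvd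
  exact ((Nat.prime_iff_prime_int.mp hℓ).dvd_or_dvd hdvd).resolve_left hℓf

/-- Let `ℓ ≠ p` be primes and `L/K` an extension of number fields of degree
`p`.  Let `q` be a nonzero prime ideal of `𝓞 K` such that either `q 𝓞 L` is prime or
`q 𝓞 L = P ^ p` for a prime `P` of `𝓞 L`, and let `P` be the unique prime of `𝓞 L` over `q`.
If `α ∈ Lˣ` has norm an `ℓ`-th power in `Kˣ`, then `ℓ ∣ ord_P α`, where `ord_P α` is computed
as `ord_P a − ord_P b` for any representation `α = a / b` with nonzero `a, b ∈ 𝓞 L`. -/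
theorem stmt_6 (ℓ p : ℕ) (hℓ : ℓ.Prime) (hp : p.Prime) (hℓp : ℓ ≠ p)
    (K L : Type*) [Field K] [Field L] [NumberField K] [NumberField L]
    [Algebra K L] [FiniteDimensional K L] (hdeg : Module.finrank K L = p)
    (q : Ideal (𝓞 K)) (hq : q.IsPrime) (hq0 : q ≠ ⊥)
    (P : Ideal (𝓞 L)) (hP : P.IsPrime)
    (hPq : P.comap (algebraMap (𝓞 K) (𝓞 L)) = q)
    (hqL : q.map (algebraMap (𝓞 K) (𝓞 L)) = P ∨ q.map (algebraMap (𝓞 K) (𝓞 L)) = P ^ p)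
    (α : L) (hα : α ≠ 0)
    (hnorm : ∃ x : K, x ^ ℓ = Algebra.norm K α)
    (a b : 𝓞 L) (ha : a ≠ 0) (hb : b ≠ 0)
    (hab : α = algebraMap (𝓞 L) L a / algebraMap (𝓞 L) L b) :
    (ℓ : ℤ) ∣ (multiplicity P (Ideal.span {a}) : ℤ) - (multiplicity P (Ideal.span {b}) : ℤ) :=
  stmt_6_general ℓ p hℓ hp hℓp K L hdeg q hq hq0 P hP hPq hqL α hnorm a b ha hb hab
end

section
/- Let ℓ be a prime number, K a number field, v a nonzero prime ideal of O_K dividing ℓO_K, and e = ord_v(ℓO_K) the exponent of v in the factorization of ℓO_K. Let m be a positive integer with m(ℓ − 1) > eℓ. If α, a ∈ O_K are such that a ∉ v and α ≡ a^ℓ (mod v^m), then α is an ℓ-th power in the v-adic completion K_v of K, i.e. there exists x ∈ K_v with x^ℓ = α. -/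
open NumberField IsDedekindDomain
open Filter Topology WithZero Finset

/-!
Newton's method for `X ^ ℓ - α`, started at `a`. If `v x = 1`, `v ℓ = exp (-e)` and
`v (x ^ ℓ - α) ≤ exp (-n)` with `e ℓ < n (ℓ - 1)`, the Newton correction `t` has
`v t ≤ exp (e - n) < 1`. Beyond the linear term, the binomial expansion of `(x + t) ^ ℓ` consists
of `t ^ ℓ` and of multiples of `ℓ t ^ 2`, all of valuation at most `exp (-(n + 1))`. Hence the
iterates stay units, their `ℓ`-th powers tend to `α` and their steps tend to `0`; in the complete
nonarchimedean field `K_v` they converge to an `ℓ`-th root of `α`.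
-/

lemma add_pow_succ_sub_linear {R : Type*} [CommRing R] (x t : R) (n : ℕ) :
    (x + t) ^ (n + 1) - (x ^ (n + 1) + (n + 1) * x ^ n * t) =
      ∑ k ∈ range n, x ^ k * t ^ (n + 1 - k) * ((n + 1).choose k : R) := by
  rw [add_pow, sum_range_succ, sum_range_succ, Nat.choose_succ_self_right]
  simp only [Nat.sub_self, pow_zero, Nat.choose_self, Nat.cast_one, mul_one,
    Nat.add_sub_cancel_left, pow_one, Nat.cast_add, Nat.cast_one]
  ring

namespace Valued

variable {R : Type*} [Ring R]

instance nonarchimedeanAddGroup {Γ₀ : Type*} [LinearOrderedCommGroupWithZero Γ₀]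
    [Valued R Γ₀] : NonarchimedeanAddGroup R where
  is_nonarchimedean U hU := by
    obtain ⟨γ, hγ⟩ := mem_nhds_zero.mp hU
    exact ⟨⟨v.restrict.ltAddSubgroup γ, isOpen_ball R γ.1⟩, hγ⟩

lemma tendsto_zero_of_v_le_exp [Valued R ℤᵐ⁰] {f : ℕ → R} (c : ℤ)
    (hf : ∀ n, v (f n) ≤ exp (c - n)) : Tendsto f atTop (𝓝 0) := by
  simp only [(hasBasis_nhds_zero _ _).tendsto_right_iff, forall_const, eventually_atTop]
  intro γ
  obtain ⟨n, hn⟩ := exists_pow_lt₀ (exp_lt_exp.mpr (neg_one_lt_zero : (-1 : ℤ) < 0))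
    (Units.map (MonoidWithZeroHom.ValueGroup₀.embedding (f := .ofClass (v : Valuation R ℤᵐ⁰))) γ)
  refine ⟨n + c.toNat, fun k hk ↦ ?_⟩
  rw [Set.mem_ofPred_eq, Valuation.restrict_lt_iff_lt_embedding]
  refine (hf k).trans_lt (hn.trans_le' ?_)
  rw [← exp_nsmul, exp_le_exp]
  have := Int.self_le_toNat c
  simp only [smul_neg, nsmul_eq_mul, mul_one]
  omega

end Valued

lemma Valuation.map_natCast_le_one {R Γ₀ : Type*} [Ring R] [LinearOrderedCommMonoidWithZero Γ₀]
    (v : Valuation R Γ₀) (n : ℕ) : v n ≤ 1 := by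
  induction n with
  | zero => simp
  | succ k ih => rw [Nat.cast_succ]; exact (v.map_add _ _).trans (max_le ih v.map_one.le)

noncomputable def newtonRootStep {F : Type*} [Field F] (ℓ : ℕ) (A x : F) : F :=
  x + (A - x ^ ℓ) / (ℓ * x ^ (ℓ - 1))

section NewtonRoot

variable {F : Type*} [Field F] {ℓ e n : ℕ} {A x t : F}

lemma newtonRootStep_linearization_eq (hℓ : (ℓ : F) ≠ 0) (hx : x ≠ 0) :
    x ^ ℓ + ℓ * x ^ (ℓ - 1) * (newtonRootStep ℓ A x - x) = A := by
  rw [newtonRootStep, add_sub_cancel_left, mul_div_cancel₀ _ (by positivity)]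
  ring

variable [Valued F ℤᵐ⁰]

lemma valuation_newtonRootStep_sub_le (hℓe : Valued.v (ℓ : F) = exp (-(e : ℤ)))
    (hx : Valued.v x = 1) (hxA : Valued.v (x ^ ℓ - A) ≤ exp (-(n : ℤ))) :
    Valued.v (newtonRootStep ℓ A x - x) ≤ exp ((e : ℤ) - n) := by
  rw [newtonRootStep, add_sub_cancel_left, map_div₀, map_mul, map_pow, hx, one_pow, mul_one,
    hℓe, Valuation.map_sub_swap, div_le_iff₀ (zero_lt_iff.mpr exp_ne_zero), ← exp_add]
  convert hxA using 2
  ring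

lemma valuation_add_pow_sub_linear_le (hℓ : ℓ.Prime) (hℓe : Valued.v (ℓ : F) = exp (-(e : ℤ)))
    (hn : e * ℓ < n * (ℓ - 1)) (hx : Valued.v x = 1) (ht : Valued.v t ≤ exp ((e : ℤ) - n)) :
    Valued.v ((x + t) ^ ℓ - (x ^ ℓ + ℓ * x ^ (ℓ - 1) * t)) ≤ exp (-((n : ℤ) + 1)) := by
  obtain ⟨k, rfl⟩ : ∃ k, ℓ = k + 1 := Nat.exists_eq_add_one.mpr hℓ.pos
  have hzn : (e : ℤ) * (k + 1) < n * k := by exact_mod_cast hn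
  push_cast
  rw [add_pow_succ_sub_linear]
  refine Valuation.map_sum_le _ fun i hi ↦ ?_
  have hik : i < k := mem_range.mp hi
  rw [map_mul, map_mul, map_pow, map_pow, hx, one_pow, one_mul]
  have htpow : Valued.v t ^ (k + 1 - i) ≤ exp ((k + 1 - i : ℕ) * ((e : ℤ) - n)) := by
    rw [← nsmul_eq_mul, exp_nsmul]
    exact pow_le_pow_left₀ zero_le ht _
  rcases Nat.eq_zero_or_pos i with rfl | hi0
  · rw [Nat.choose_zero_right, Nat.cast_one, map_one, mul_one]
    refine htpow.trans (exp_le_exp.mpr ?_)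
    push_cast
    nlinarith
  · obtain ⟨d, hd⟩ := hℓ.dvd_choose_self hi0.ne' (by omega)
    have hchoose : Valued.v ((k + 1).choose i : F) ≤ exp (-(e : ℤ)) := by
      rw [hd, Nat.cast_mul, map_mul, hℓe]
      exact mul_le_of_le_one_right' (Valued.v.map_natCast_le_one d)
    refine (mul_le_mul' htpow hchoose).trans ?_
    rw [← exp_add, exp_le_exp]
    have : (2 : ℤ) ≤ (k + 1 - i : ℕ) := by omega
    nlinarith

lemma valuation_newtonRootStep_and_pow_sub_le (hℓ : ℓ.Prime)
    (hℓe : Valued.v (ℓ : F) = exp (-(e : ℤ))) (hn : e * ℓ < n * (ℓ - 1)) (hx : Valued.v x = 1)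
    (hxA : Valued.v (x ^ ℓ - A) ≤ exp (-(n : ℤ))) :
    Valued.v (newtonRootStep ℓ A x) = 1 ∧
      Valued.v (newtonRootStep ℓ A x ^ ℓ - A) ≤ exp (-((n : ℤ) + 1)) := by
  have hstep := valuation_newtonRootStep_sub_le hℓe hx hxA
  have hen : (e : ℤ) < n := by
    have := hℓ.two_le
    zify [hℓ.one_le] at hn this
    nlinarith
  constructor
  · have hlt : Valued.v (newtonRootStep ℓ A x - x) < Valued.v x :=
      hx ▸ hstep.trans_lt (by rw [← exp_zero, exp_lt_exp]; omega)
    rw [← add_sub_cancel x (newtonRootStep ℓ A x), Valued.v.map_add_eq_of_lt_left hlt, hx]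
  · have hℓ0 : (ℓ : F) ≠ 0 := by
      intro h; rw [h, map_zero] at hℓe; exact exp_ne_zero hℓe.symm
    have hx0 : x ≠ 0 := by rintro rfl; simp at hx
    nth_rewrite 2 [← newtonRootStep_linearization_eq (A := A) hℓ0 hx0]
    simpa using valuation_add_pow_sub_linear_le hℓ hℓe hn hx hstep

end NewtonRoot

theorem Valued.exists_pow_eq_of_valuation_pow_sub_le {F : Type*} [Field F] [Valued F ℤᵐ⁰]
    [CompleteSpace F] {ℓ e m : ℕ} (hℓ : ℓ.Prime) (hℓe : Valued.v (ℓ : F) = exp (-(e : ℤ)))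
    (hme : e * ℓ < m * (ℓ - 1)) {A a : F} (ha : Valued.v a = 1)
    (haA : Valued.v (a ^ ℓ - A) ≤ exp (-(m : ℤ))) :
    ∃ x : F, x ^ ℓ = A := by
  set u : ℕ → F := fun k ↦ (newtonRootStep ℓ A)^[k] a
  have hu_succ (k : ℕ) : u (k + 1) = newtonRootStep ℓ A (u k) := Function.iterate_succ_apply' ..
  have hme_mono (k : ℕ) : e * ℓ < (m + k) * (ℓ - 1) :=
    hme.trans_le (Nat.mul_le_mul_right _ (Nat.le_add_right _ _))
  have hu (k : ℕ) : Valued.v (u k) = 1 ∧ Valued.v (u k ^ ℓ - A) ≤ exp (-((m + k : ℕ) : ℤ)) := by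
    induction k with
    | zero => exact ⟨ha, haA⟩
    | succ k ih =>
      rw [hu_succ, Nat.add_succ, Nat.cast_succ]
      exact valuation_newtonRootStep_and_pow_sub_le hℓ hℓe (hme_mono k) ih.1 ih.2
  have hdiff : Tendsto (fun k ↦ u (k + 1) - u k) atTop (𝓝 0) := by
    refine Valued.tendsto_zero_of_v_le_exp ((e : ℤ) - m) fun k ↦ ?_
    rw [hu_succ]
    convert valuation_newtonRootStep_sub_le hℓe (hu k).1 (hu k).2 using 2
    push_cast; ring
  have hpow : Tendsto (fun k ↦ u k ^ ℓ - A) atTop (𝓝 0) :=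
    Valued.tendsto_zero_of_v_le_exp (-(m : ℤ)) fun k ↦ (hu k).2.trans_eq (by push_cast; ring_nf)
  obtain ⟨x, hx⟩ := cauchySeq_tendsto_of_complete
    (NonarchimedeanAddGroup.cauchySeq_of_tendsto_sub_nhds_zero hdiff)
  exact ⟨x, tendsto_nhds_unique (hx.pow ℓ) (tendsto_sub_nhds_zero_iff.mp hpow)⟩

theorem NumberField.RingOfIntegers.valued_algebraMap_adicCompletion {K : Type*} [Field K]
    [NumberField K] (v : HeightOneSpectrum (𝓞 K)) (r : 𝓞 K) :
    Valued.v (algebraMap (𝓞 K) (v.adicCompletion K) r) = v.intValuation r := by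
  rw [IsScalarTower.algebraMap_apply (𝓞 K) K, ← v.valuation_of_algebraMap (K := K)]
  exact v.valuedAdicCompletion_eq_valuation' _

theorem stmt_7_general (ℓ : ℕ) (hℓ : ℓ.Prime) (K : Type*) [Field K] [NumberField K]
    (v : HeightOneSpectrum (𝓞 K))
    (e : ℕ) (he : e = multiplicity v.asIdeal (Ideal.span {(ℓ : 𝓞 K)}))
    (m : ℕ) (hme : e * ℓ < m * (ℓ - 1))
    (α a : 𝓞 K) (ha : a ∉ v.asIdeal) (hcong : α - a ^ ℓ ∈ v.asIdeal ^ m) :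
    ∃ x : v.adicCompletion K, x ^ ℓ = algebraMap (𝓞 K) (v.adicCompletion K) α := by
  refine Valued.exists_pow_eq_of_valuation_pow_sub_le hℓ ?_ hme
    (a := algebraMap (𝓞 K) (v.adicCompletion K) a) ?_ ?_
  · rw [← map_natCast (algebraMap (𝓞 K) _), RingOfIntegers.valued_algebraMap_adicCompletion,
      v.intValuation_eq_exp_neg_multiplicity (Nat.cast_ne_zero.mpr hℓ.ne_zero), he]
  · rw [RingOfIntegers.valued_algebraMap_adicCompletion, v.intValuation_eq_one_iff_mem_primeCompl]
    exact ha
  · rw [← map_pow, ← map_sub, RingOfIntegers.valued_algebraMap_adicCompletion,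
      v.intValuation_le_pow_iff_mem, ← neg_sub]
    exact neg_mem hcong

/-- Let `ℓ` be a prime, `K` a number field, `v` a prime of `𝓞 K` dividing
`ℓ 𝓞 K` with `e = ord_v(ℓ 𝓞 K)`, and `m` a positive integer with `m(ℓ − 1) > eℓ`.  If
`α, a ∈ 𝓞 K` with `a ∉ v` and `α ≡ a^ℓ (mod v^m)`, then `α` is an `ℓ`-th power in the
completion `K_v`. -/
theorem stmt_7 (ℓ : ℕ) (hℓ : ℓ.Prime) (K : Type*) [Field K] [NumberField K]
    (v : HeightOneSpectrum (𝓞 K)) (hv : ((ℓ : 𝓞 K)) ∈ v.asIdeal)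
    (e : ℕ) (he : e = multiplicity v.asIdeal (Ideal.span {(ℓ : 𝓞 K)}))
    (m : ℕ) (hm : 0 < m) (hme : e * ℓ < m * (ℓ - 1))
    (α a : 𝓞 K) (ha : a ∉ v.asIdeal) (hcong : α - a ^ ℓ ∈ v.asIdeal ^ m) :
    ∃ x : v.adicCompletion K, x ^ ℓ = algebraMap (𝓞 K) (v.adicCompletion K) α :=
  stmt_7_general ℓ hℓ K v e he m hme α a ha hcong
end

section
/- Let K ⊆ L ⊆ M be number fields such that [L : K] = p is a prime number, the extension M/L is Galois, and p does not divide [M : L]. Let Q be a nonzero prime ideal of O_M, set q = Q ∩ O_K, and suppose that the residue degree of Q over q equals p, i.e. [O_M/Q : O_K/q] = p. Then the ideal qO_L is a prime ideal of O_L; in particular, q is inert in L. -/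
/-!
Put `P = Q ∩ 𝓞 L`. Residue degrees multiply in the tower `K ⊆ L ⊆ M`, so `f(Q/P) ∣ p`; since
`M/L` is Galois, `f(Q/P)` also divides `[M : L]`, which is prime to `p`. Hence `f(Q/P) = 1` and
`f(P/q) = p = [L : K]`. In the fundamental identity `∑ e f = [L : K]` over the primes of `𝓞 L`
above `q`, the term of `P` alone already reaches `[L : K]`, so `P` is the only prime above `q`,
it is unramified, and `q 𝓞 L = P`.
-/

open NumberField Module

namespace Ideal

theorem inertiaDeg_dvd_card_of_isGaloisGroup {A B : Type*} [CommRing A] [IsDomain A] [CommRing B]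
    [IsDomain B] [Algebra A B] [Module.Finite A B] [Module.Flat A B]
    (G : Type*) [Group G] [Finite G] [MulSemiringAction G B] [IsGaloisGroup G A B]
    (P : Ideal B) [P.IsPrime] : P.inertiaDeg A ∣ Nat.card G := by
  rw [← ncard_primesOver_mul_ramificationIdxIn_mul_inertiaDegIn (P.under A) B G,
    inertiaDegIn_eq_inertiaDeg (P.under A) P G]
  exact Dvd.intro_left _ (mul_assoc _ _ _)

theorem map_eq_of_inertiaDeg_eq_finrank {R S : Type*} [CommRing R] [IsDomain R] [CommRing S]
    [IsDedekindDomain S] [Algebra R S] [Module.Finite R S] [Module.Flat R S]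
    {p : Ideal R} [p.IsMaximal] (hp : p ≠ ⊥) (P : Ideal S) [P.IsPrime] [P.LiesOver p]
    (h : P.inertiaDeg R = finrank R S) : p.map (algebraMap R S) = P := by
  have hP : P ∈ p.primesOver S := ⟨inferInstance, inferInstance⟩
  set s := (p.primesOver S).toFinset
  have hPs : P ∈ s := Set.mem_toFinset.mpr hP
  have hsum : ∑ Q ∈ s, Q.ramificationIdx R * Q.inertiaDeg R = finrank R S := by
    rw [← sum_ramification_inertia_eq_finrank p S, ← Finset.sum_set_coe]
  have hpos : ∀ Q ∈ s, 0 < Q.ramificationIdx R * Q.inertiaDeg R := by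
    intro Q hQ
    have := (Set.mem_toFinset.mp hQ).1
    exact Nat.mul_pos (Q.ramificationIdx_pos R) (Q.inertiaDeg_pos R)
  have hn : 0 < finrank R S := h ▸ P.inertiaDeg_pos R
  have hle : finrank R S ≤ P.ramificationIdx R * finrank R S :=
    Nat.le_mul_of_pos_left _ (P.ramificationIdx_pos R)
  rw [← Finset.add_sum_erase s _ hPs, h] at hsum
  have hrest : ∑ Q ∈ s.erase P, Q.ramificationIdx R * Q.inertiaDeg R = 0 := by omega
  have heP : P.ramificationIdx R = 1 := Nat.eq_of_mul_eq_mul_right hn (by omega)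
  have huniq : ∀ Q ∈ p.primesOver S, Q = P := fun Q hQ => by_contra fun hne =>
    (hpos Q (Set.mem_toFinset.mpr hQ)).ne'
      (Finset.sum_eq_zero_iff.mp hrest Q (Finset.mem_erase.mpr ⟨hne, Set.mem_toFinset.mpr hQ⟩))
  -- `s` is not rewritten to `{P}` here: the `Fintype` instance behind `toFinset` in the
  -- factorisation lemma need not be the one used for `s`.
  rw [map_algebraMap_eq_finsetProd_pow hp, Finset.prod_eq_single_of_mem P (Set.mem_toFinset.mpr hP)
    fun Q hQ hne => absurd (huniq Q (Set.mem_toFinset.mp hQ)) hne, heP, pow_one]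

end Ideal

/-- Let `K ⊆ L ⊆ M` be number fields with `[L : K] = p` prime, `M/L` Galois
and `p ∤ [M : L]`.  If `Q` is a nonzero prime of `𝓞 M`, `q = Q ∩ 𝓞 K`, and the residue degree
of `Q` over `q` equals `p`, then `q 𝓞 L` is a prime ideal of `𝓞 L`, i.e. `q` is inert in
`L`. -/
theorem stmt_11 (p : ℕ) (hp : p.Prime)
    (K L M : Type*) [Field K] [Field L] [Field M]
    [NumberField K] [NumberField L] [NumberField M]
    [Algebra K L] [Algebra L M] [Algebra K M] [IsScalarTower K L M]
    (hdeg : Module.finrank K L = p) [IsGalois L M]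
    (hndvd : ¬ p ∣ Module.finrank L M)
    (Q : Ideal (𝓞 M)) (hQ : Q.IsPrime) (hQ0 : Q ≠ ⊥)
    (q : Ideal (𝓞 K)) (hq : q = Q.comap (algebraMap (𝓞 K) (𝓞 M)))
    (hres : Ideal.inertiaDeg' q Q = p) :
    (q.map (algebraMap (𝓞 K) (𝓞 L))).IsPrime := by
  have : Q.IsMaximal := hQ.isMaximal hQ0
  set P := Q.under (𝓞 L)
  have : Q.LiesOver q := ⟨hq⟩
  have : P.LiesOver q := ⟨by rw [hq, Ideal.under_under]⟩
  have hq0 : q ≠ ⊥ := hq ▸ Ideal.under_ne_bot (𝓞 K) hQ0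
  have : q.IsMaximal := hq ▸ Ideal.IsMaximal.under (𝓞 K) Q
  have hQK : Q.inertiaDeg (𝓞 K) = p := by rw [← hres, q.inertiaDeg'_eq_inertiaDeg Q]
  have hQL : Q.inertiaDeg (𝓞 L) = 1 := by
    have hdvd_p : Q.inertiaDeg (𝓞 L) ∣ p := hQK ▸ Ideal.inertiaDeg_above_dvd P Q
    have hdvd_n : Q.inertiaDeg (𝓞 L) ∣ finrank L M := by
      rw [← IsGalois.card_aut_eq_finrank]
      exact Ideal.inertiaDeg_dvd_card_of_isGaloisGroup Gal(M/L) Q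
    have hcop : p.Coprime (finrank L M) := hp.coprime_iff_not_dvd.mpr hndvd
    exact (hcop.coprime_dvd_left hdvd_p).eq_one_of_dvd hdvd_n
  have hPK : P.inertiaDeg (𝓞 K) = finrank (𝓞 K) (𝓞 L) := by
    rw [← IsFractionRing.finrank_eq (𝓞 K) K (𝓞 L) L, hdeg, ← hQK, Ideal.inertiaDeg_tower P Q,
      hQL, mul_one]
  rw [Ideal.map_eq_of_inertiaDeg_eq_finrank hq0 P hPK]
  infer_instance
end
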